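/- (Monotone consequences of a cross.) In the setting of a cross with x, y ∈ B_A\{0}: if n, m are indices with y(ν,k)_n > x(λ,i)_n and x(λ,j)_m > y(ν,l)_m, then y(ν,l)_n > x(λ,j)_n and x(λ,i)_m > y(ν,k)_m. Moreover such indices n ≠ m exist. -/
import Mathlib


open scoped Classical

def eVec (d α : ℕ) (i : Fin d) : Fin d → ℕ := fun j => if j = i then α else 0

def genSet (d α c : ℕ) (a : Fin c → Fin d → ℕ) : Set (Fin d → ℕ) :=
  Set.range (eVec d α) ∪ Set.range a

def Bmon (d α c : ℕ) (a : Fin c → Fin d → ℕ) : AddSubmonoid (Fin d → ℕ) :=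
  AddSubmonoid.closure (genSet d α c a)

def Amon (d α : ℕ) : AddSubmonoid (Fin d → ℕ) :=
  AddSubmonoid.closure (Set.range (eVec d α))

def BAset (d α c : ℕ) (a : Fin c → Fin d → ℕ) : Set (Fin d → ℕ) :=
  {x | x ∈ Bmon d α c a ∧ ∀ y ∈ Amon d α, y ≠ 0 → ∀ z ∈ Bmon d α c a, z + y ≠ x}

def equivA (α : ℕ) {d : ℕ} (x y : Fin d → ℕ) : Prop :=
  ∀ i, (α : ℤ) ∣ (x i : ℤ) - (y i : ℤ)

def degv (α : ℕ) {d : ℕ} (x : Fin d → ℕ) : ℕ := (∑ i, x i) / α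

def pval {d : ℕ} (x : Fin d → ℕ) (L : List (Fin d → ℕ)) (i : ℕ) : Fin d → ℕ :=
  x - (L.take i).sum

def starSeq (d α c : ℕ) (a : Fin c → Fin d → ℕ) (x : Fin d → ℕ)
    (L : List (Fin d → ℕ)) : Prop :=
  (∀ b ∈ L, b ∈ genSet d α c a) ∧
  ∀ i ≤ L.length, ∃ y ∈ Bmon d α c a, y + (L.take i).sum = x

def Lam (d α c : ℕ) (a : Fin c → Fin d → ℕ) (x : Fin d → ℕ) :
    Set (List (Fin d → ℕ)) :=
  {L | starSeq d α c a x L ∧ L.length = degv α x}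

noncomputable def DeltaF (α : ℕ) {d : ℕ} (x y : Fin d → ℕ)
    (L M : List (Fin d → ℕ)) : Finset (ℕ × ℕ) :=
  (Finset.range (L.length + 1) ×ˢ Finset.range (M.length + 1)).filter
    (fun p => equivA α (pval x L p.1) (pval y M p.2))

def hmin {d : ℕ} (x y : Fin d → ℕ) : Fin d → ℕ := fun i => min (x i) (y i)

def crossless (α : ℕ) {d : ℕ} (x y : Fin d → ℕ) (L M : List (Fin d → ℕ)) : Prop :=
  ∀ p ∈ DeltaF α x y L M, ∀ q ∈ DeltaF α x y L M, p ≤ q ∨ q ≤ p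

def isCross (α : ℕ) {d : ℕ} (x y : Fin d → ℕ) (L M : List (Fin d → ℕ))
    (i j l k : ℕ) : Prop :=
  i < j ∧ j ≤ L.length ∧ l < k ∧ k ≤ M.length ∧
  equivA α (pval x L i) (pval y M k) ∧ equivA α (pval x L j) (pval y M l)

noncomputable def deltaMin (d α c : ℕ) (a : Fin c → Fin d → ℕ)
    (x y : Fin d → ℕ) : ℕ :=
  sInf {n | ∃ L ∈ Lam d α c a x, ∃ M ∈ Lam d α c a y,
    n + 2 = (DeltaF α x y L M).card}

def eqvSetoid (α : ℕ) {d : ℕ} (S : Set (Fin d → ℕ)) : Setoid S where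
  r x y := equivA α x.1 y.1
  iseqv := by
    refine ⟨fun x i => ?_, fun {x y} h i => ?_, fun {x y z} h1 h2 i => ?_⟩
    · simp
    · exact dvd_sub_comm.mp (h i)
    · have := dvd_add (h1 i) (h2 i)
      simpa [sub_add_sub_cancel] using this

noncomputable def numClasses (d α c : ℕ) (a : Fin c → Fin d → ℕ) : ℕ :=
  Nat.card (Quotient (eqvSetoid α (BAset d α c a)))

section AuxCross

lemma gen_sum' {d α c : ℕ} {a : Fin c → Fin d → ℕ} (ha : ∀ i, ∑ j, a i j = α)
    {b : Fin d → ℕ} (hb : b ∈ genSet d α c a) : ∑ n, b n = α := by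
  rcases hb with ⟨i, rfl⟩ | ⟨i, rfl⟩
  · simp [eVec]
  · exact ha i

lemma listCoordSum' {d α : ℕ} (l : List (Fin d → ℕ)) (h : ∀ b ∈ l, ∑ n, b n = α) :
    ∑ n, l.sum n = l.length * α := by
  induction l with
  | nil => simp
  | cons b t ih =>
    have hb := h b (by simp)
    have ht := ih (fun b hb => h b (by simp [hb]))
    have : ∑ n, (b :: t).sum n = ∑ n, b n + ∑ n, t.sum n := by
      simp [List.sum_cons, Finset.sum_add_distrib]
    rw [this, hb, ht, List.length_cons]
    ring

lemma take_sum_mono' {d : ℕ} (L : List (Fin d → ℕ)) {s t : ℕ} (h : s ≤ t) (n : Fin d) :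
    (L.take s).sum n ≤ (L.take t).sum n := by
  have e : L.take t = L.take s ++ (L.drop s).take (t - s) := by
    rw [← List.take_add]
    congr 1
    omega
  rw [e, List.sum_append]
  simp

lemma mem_Amon' {d α : ℕ} (hα : 0 < α) {w : Fin d → ℕ} (h : ∀ n, α ∣ w n) :
    w ∈ Amon d α := by
  have hw : w = ∑ n : Fin d, (w n / α) • eVec d α n := by
    funext j
    rw [Finset.sum_apply]
    have h1 : ∀ n : Fin d, ((w n / α) • eVec d α n) j
        = if j = n then (w n / α) * α else 0 := by
      intro n
      simp [eVec, mul_ite]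
    simp only [h1]
    rw [Finset.sum_ite_eq]
    simp [Nat.div_mul_cancel (h j)]
  rw [hw]
  exact AddSubmonoid.sum_mem _ fun n _ =>
    AddSubmonoid.nsmul_mem _ (AddSubmonoid.subset_closure (Set.mem_range_self n)) _

lemma pval_eq' {d : ℕ} {x z : Fin d → ℕ} {L : List (Fin d → ℕ)} {s : ℕ}
    (h : z + (L.take s).sum = x) : pval x L s = z := by
  funext n
  have h1 := congrFun h n
  simp only [Pi.add_apply] at h1
  simp only [pval, Pi.sub_apply]
  omega

lemma pval_mem_BA' {d α c : ℕ} {a : Fin c → Fin d → ℕ} {x : Fin d → ℕ}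
    (hx : x ∈ BAset d α c a) {L : List (Fin d → ℕ)} (hL : starSeq d α c a x L)
    {s : ℕ} (hs : s ≤ L.length) : pval x L s ∈ BAset d α c a := by
  obtain ⟨z, hzB, hzx⟩ := hL.2 s hs
  rw [pval_eq' hzx]
  have hS : (L.take s).sum ∈ Bmon d α c a :=
    list_sum_mem (fun b hb =>
      AddSubmonoid.subset_closure (hL.1 b (List.mem_of_mem_take hb)))
  refine ⟨hzB, fun e he he0 w hw hwe => ?_⟩
  exact hx.2 e he he0 (w + (L.take s).sum) (add_mem hw hS)
    (by rw [add_right_comm, hwe, hzx])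

lemma forced_eq' {d α c : ℕ} (hα : 0 < α) {a : Fin c → Fin d → ℕ} {u z : Fin d → ℕ}
    (hu : u ∈ BAset d α c a) (hz : z ∈ Bmon d α c a)
    (hle : ∀ n, z n ≤ u n) (heq : equivA α u z) : u = z := by
  by_contra hne
  have hdvd : ∀ n, α ∣ u n - z n := by
    intro n
    have h1 := heq n
    have h2 := hle n
    have h3 : ((u n - z n : ℕ) : ℤ) = (u n : ℤ) - z n := by
      push_cast [Nat.cast_sub h2]; ring
    exact_mod_cast h3 ▸ h1
  have hw : z + (u - z) = u := by
    funext n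
    have := hle n
    simp only [Pi.add_apply, Pi.sub_apply]
    omega
  have hne0 : u - z ≠ 0 := by
    intro h0
    apply hne
    funext n
    have h1 := congrFun h0 n
    have h2 := hle n
    simp only [Pi.sub_apply, Pi.zero_apply] at h1
    omega
  exact hu.2 (u - z) (mem_Amon' hα hdvd) hne0 z hz hw

lemma deg_eq' {d α c : ℕ} {a : Fin c → Fin d → ℕ} (ha : ∀ i, ∑ j, a i j = α)
    {x z : Fin d → ℕ} {L : List (Fin d → ℕ)} (hgen : ∀ b ∈ L, b ∈ genSet d α c a)
    {s : ℕ} (hs : s ≤ L.length) (h : z + (L.take s).sum = x) :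
    ∑ n, z n + s * α = ∑ n, x n := by
  have hS : ∑ n, (L.take s).sum n = s * α := by
    rw [listCoordSum' _ (fun b hb => gen_sum' ha (hgen b (List.mem_of_mem_take hb)))]
    rw [List.length_take]
    congr 1
    omega
  have h2 : ∑ n, x n = ∑ n, z n + ∑ n, (L.take s).sum n := by
    rw [← Finset.sum_add_distrib]
    exact Finset.sum_congr rfl fun n _ => (congrFun h n).symm
  omega

end AuxCross

/-- monotone consequences of a cross: in the setting of a cross with
`x, y ∈ B_A \ {0}`, whenever `y(ν,k)_n > x(λ,i)_n` and `x(λ,j)_m > y(ν,l)_m` one has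
`y(ν,l)_n > x(λ,j)_n` and `x(λ,i)_m > y(ν,k)_m`; moreover such indices `n ≠ m` exist. -/
theorem cross_monotone_consequences (d α c : ℕ) (hd : 0 < d) (hα : 0 < α) (hc : 0 < c)
    (a : Fin c → Fin d → ℕ) (ha : ∀ i, ∑ j, a i j = α)
    (x y : Fin d → ℕ) (hx : x ∈ BAset d α c a) (hx0 : x ≠ 0)
    (hy : y ∈ BAset d α c a) (hy0 : y ≠ 0) (hxy : equivA α x y)
    (L : List (Fin d → ℕ)) (hL : L ∈ Lam d α c a x)
    (M : List (Fin d → ℕ)) (hM : M ∈ Lam d α c a y)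
    (i j l k : ℕ) (hcross : isCross α x y L M i j l k) :
    (∀ n m : Fin d, pval x L i n < pval y M k n → pval y M l m < pval x L j m →
      pval x L j n < pval y M l n ∧ pval y M k m < pval x L i m) ∧
    (∃ n m : Fin d, n ≠ m ∧ pval x L i n < pval y M k n ∧ pval y M l m < pval x L j m) := by
  obtain ⟨hLstar, hLlen⟩ := hL
  obtain ⟨hMstar, hMlen⟩ := hM
  obtain ⟨hij, hjL, hlk, hkM, heq1, heq2⟩ := hcross
  have hiL : i ≤ L.length := le_trans (le_of_lt hij) hjL
  have hlM : l ≤ M.length := le_trans (le_of_lt hlk) hkM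
  obtain ⟨zi, hziB, hzi⟩ := hLstar.2 i hiL
  obtain ⟨zj, hzjB, hzj⟩ := hLstar.2 j hjL
  obtain ⟨wl, hwlB, hwl⟩ := hMstar.2 l hlM
  obtain ⟨wk, hwkB, hwk⟩ := hMstar.2 k hkM
  have epi : pval x L i = zi := pval_eq' hzi
  have epj : pval x L j = zj := pval_eq' hzj
  have epl : pval y M l = wl := pval_eq' hwl
  have epk : pval y M k = wk := pval_eq' hwk
  have hziBA : zi ∈ BAset d α c a := epi ▸ pval_mem_BA' hx hLstar hiL
  have hwlBA : wl ∈ BAset d α c a := epl ▸ pval_mem_BA' hy hMstar hlM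
  rw [epi, epk] at heq1
  rw [epj, epl] at heq2
  rw [epi, epj, epk, epl]
  have heq2sym : equivA α wl zj := fun n => dvd_sub_comm.mp (heq2 n)
  -- monotonicity
  have hij_mono : ∀ n, zj n ≤ zi n := by
    intro n
    have h1 := congrFun hzi n
    have h2 := congrFun hzj n
    have h3 := take_sum_mono' L (le_of_lt hij) n
    simp only [Pi.add_apply] at h1 h2
    omega
  have hlk_mono : ∀ n, wk n ≤ wl n := by
    intro n
    have h1 := congrFun hwl n
    have h2 := congrFun hwk n
    have h3 := take_sum_mono' M (le_of_lt hlk) n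
    simp only [Pi.add_apply] at h1 h2
    omega
  -- degree contradiction if both equalities hold
  have hfinal : zi = wk → wl = zj → False := by
    intro e1 e2
    have d1 : ∑ n, zi n + i * α = ∑ n, x n := deg_eq' ha hLstar.1 hiL hzi
    have d2 : ∑ n, zj n + j * α = ∑ n, x n := deg_eq' ha hLstar.1 hjL hzj
    have d3 : ∑ n, wl n + l * α = ∑ n, y n := deg_eq' ha hMstar.1 hlM hwl
    have d4 : ∑ n, wk n + k * α = ∑ n, y n := deg_eq' ha hMstar.1 hkM hwk
    rw [e1] at d1
    rw [e2] at d3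
    have e3 : ∑ n, wk n + i * α = ∑ n, zj n + j * α := d1.trans d2.symm
    have e4 : ∑ n, zj n + l * α = ∑ n, wk n + k * α := d3.trans d4.symm
    have key : i * α + l * α = j * α + k * α := by omega
    have key2 : (i + l) * α = (j + k) * α := by rw [add_mul, add_mul]; exact key
    have key3 : i + l = j + k := Nat.eq_of_mul_eq_mul_right hα key2
    omega
  have hn : ∃ n, zi n < wk n := by
    by_contra h
    push_neg at h
    have e1 : zi = wk := forced_eq' hα hziBA hwkB h heq1
    have hzjle : ∀ n, zj n ≤ wl n := fun n => by
      have h1 := hij_mono n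
      have h2 := hlk_mono n
      have h3 := congrFun e1 n
      omega
    have e2 : wl = zj := forced_eq' hα hwlBA hzjB hzjle heq2sym
    exact hfinal e1 e2
  have hm : ∃ m, wl m < zj m := by
    by_contra h
    push_neg at h
    have e2 : wl = zj := forced_eq' hα hwlBA hzjB h heq2sym
    have hwkle : ∀ n, wk n ≤ zi n := fun n => by
      have h1 := hij_mono n
      have h2 := hlk_mono n
      have h3 := congrFun e2 n
      omega
    have e1 : zi = wk := forced_eq' hα hziBA hwkB hwkle heq1
    exact hfinal e1 e2
  constructor
  · intro n m h1 h2
    have := hij_mono n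
    have := hlk_mono n
    have := hij_mono m
    have := hlk_mono m
    exact ⟨by omega, by omega⟩
  · obtain ⟨n, hn⟩ := hn
    obtain ⟨m, hm⟩ := hm
    refine ⟨n, m, ?_, hn, hm⟩
    intro hnm
    subst hnm
    have := hij_mono n
    have := hlk_mono n
    omega
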